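/- arXiv:1904.06461 — 4 statements merged into one kernel-verified Lean document; each statement's English description precedes it below -/
import Mathlib

section
/- Let A, C be real n×n matrices and b, x̂ real n-vectors. If ‖I − CA‖_∞ < 1, then componentwise |A⁻¹b − x̂| ≤ |C(b − Ax̂)| + (‖C(b − Ax̂)‖_∞ / (1 − ‖I − CA‖_∞))·|I − CA|·e, where e = (1,…,1)ᵀ. -/
open Matrix

/-- Matrix infinity norm: maximum absolute row sum. -/
noncomputable def rowSumNorm {n : ℕ} (M : Matrix (Fin n) (Fin n) ℝ) : ℝ :=
  ⨆ i, ∑ j, |M i j|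

/-- Vector infinity norm: maximum absolute entry. -/
noncomputable def vecInfNorm {n : ℕ} (v : Fin n → ℝ) : ℝ :=
  ⨆ i, |v i|

/-!
Write `G = 1 - C A` and `d = A⁻¹ b - x̂`, so that `C (b - A x̂) = C A d = d - G d`.
Row `i` of `d = C A d + G d` gives `|dᵢ| ≤ |(C A d)ᵢ| + (∑ⱼ |Gᵢⱼ|) ‖d‖∞`; taking the
maximum over `i` yields `(1 - ‖G‖∞) ‖d‖∞ ≤ ‖C A d‖∞`. This estimate first shows that `C A`,
hence `A`, is invertible, and then, fed back into the row-`i` inequality, gives the bound.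
-/

section InfinityNorms

variable {n : ℕ}

lemma abs_le_vecInfNorm (v : Fin n → ℝ) (i : Fin n) : |v i| ≤ vecInfNorm v :=
  le_ciSup (f := fun i => |v i|) (Set.finite_range _).bddAbove i

lemma vecInfNorm_le {v : Fin n → ℝ} {c : ℝ} (hv : ∀ i, |v i| ≤ c) (hc : 0 ≤ c) :
    vecInfNorm v ≤ c :=
  Real.iSup_le hv hc

lemma vecInfNorm_nonneg (v : Fin n → ℝ) : 0 ≤ vecInfNorm v :=
  Real.iSup_nonneg fun i => abs_nonneg (v i)

lemma sum_abs_le_rowSumNorm (M : Matrix (Fin n) (Fin n) ℝ) (i : Fin n) :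
    ∑ j, |M i j| ≤ rowSumNorm M :=
  le_ciSup (f := fun i => ∑ j, |M i j|) (Set.finite_range _).bddAbove i

lemma rowSumNorm_nonneg (M : Matrix (Fin n) (Fin n) ℝ) : 0 ≤ rowSumNorm M :=
  Real.iSup_nonneg fun i => Finset.sum_nonneg fun j _ => abs_nonneg (M i j)

lemma abs_mulVec_le (M : Matrix (Fin n) (Fin n) ℝ) (v : Fin n → ℝ) (i : Fin n) :
    |(M *ᵥ v) i| ≤ (∑ j, |M i j|) * vecInfNorm v := by
  calc |(M *ᵥ v) i| = |∑ j, M i j * v j| := rfl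
    _ ≤ ∑ j, |M i j| * |v j| := by
        simpa only [abs_mul] using Finset.abs_sum_le_sum_abs (fun j => M i j * v j) _
    _ ≤ ∑ j, |M i j| * vecInfNorm v := by
        gcongr with j
        exact abs_le_vecInfNorm v j
    _ = (∑ j, |M i j|) * vecInfNorm v := Finset.sum_mul _ _ _ |>.symm

lemma abs_le_abs_mulVec_add_of_one_sub (M : Matrix (Fin n) (Fin n) ℝ) (v : Fin n → ℝ)
    (i : Fin n) : |v i| ≤ |(M *ᵥ v) i| + (∑ j, |(1 - M) i j|) * vecInfNorm v := by
  have hsplit : v i = (M *ᵥ v) i + ((1 - M) *ᵥ v) i := by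
    simp only [sub_mulVec, one_mulVec, Pi.sub_apply, add_sub_cancel]
  rw [hsplit]
  exact (abs_add_le _ _).trans (add_le_add_right (abs_mulVec_le _ v i) _)

lemma vecInfNorm_le_of_rowSumNorm_one_sub_lt {M : Matrix (Fin n) (Fin n) ℝ}
    (hM : rowSumNorm (1 - M) < 1) (v : Fin n → ℝ) :
    vecInfNorm v ≤ vecInfNorm (M *ᵥ v) / (1 - rowSumNorm (1 - M)) := by
  have hrow : vecInfNorm v ≤ vecInfNorm (M *ᵥ v) + rowSumNorm (1 - M) * vecInfNorm v := by
    refine vecInfNorm_le (fun i => ?_) ?_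
    · calc |v i| ≤ |(M *ᵥ v) i| + (∑ j, |(1 - M) i j|) * vecInfNorm v :=
            abs_le_abs_mulVec_add_of_one_sub M v i
        _ ≤ vecInfNorm (M *ᵥ v) + rowSumNorm (1 - M) * vecInfNorm v :=
            add_le_add (abs_le_vecInfNorm _ i)
              (mul_le_mul_of_nonneg_right (sum_abs_le_rowSumNorm _ i) (vecInfNorm_nonneg v))
    · exact add_nonneg (vecInfNorm_nonneg _)
        (mul_nonneg (rowSumNorm_nonneg _) (vecInfNorm_nonneg v))
  rw [le_div_iff₀ (sub_pos.mpr hM)]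
  linarith

lemma isUnit_det_of_rowSumNorm_one_sub_lt {M : Matrix (Fin n) (Fin n) ℝ}
    (hM : rowSumNorm (1 - M) < 1) : IsUnit M.det := by
  refine isUnit_iff_ne_zero.mpr fun hdet => ?_
  obtain ⟨v, hv, hMv⟩ := exists_mulVec_eq_zero_iff.mpr hdet
  have hv0 : vecInfNorm v ≤ 0 := by
    simpa [hMv, vecInfNorm] using vecInfNorm_le_of_rowSumNorm_one_sub_lt hM v
  exact hv (funext fun i => abs_nonpos_iff.mp ((abs_le_vecInfNorm v i).trans hv0))

end InfinityNorms

/-- Yamamoto's theorem: componentwise error bound for linear systems. -/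
theorem stmt1 {n : ℕ} (A C : Matrix (Fin n) (Fin n) ℝ) (b xh : Fin n → ℝ)
    (h : rowSumNorm (1 - C * A) < 1) :
    ∀ i, |(A⁻¹.mulVec b - xh) i| ≤
      |(C.mulVec (b - A.mulVec xh)) i| +
        vecInfNorm (C.mulVec (b - A.mulVec xh)) / (1 - rowSumNorm (1 - C * A)) *
          (∑ j, |(1 - C * A) i j|) := by
  intro i
  have hA : IsUnit A.det := by
    have hCA := isUnit_det_of_rowSumNorm_one_sub_lt h
    rw [det_mul] at hCA
    exact isUnit_of_mul_isUnit_right hCA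
  have hresidual : (C * A) *ᵥ (A⁻¹ *ᵥ b - xh) = C *ᵥ (b - A *ᵥ xh) := by
    rw [← mulVec_mulVec, mulVec_sub, mulVec_mulVec, mul_nonsing_inv A hA, one_mulVec]
  have herr := vecInfNorm_le_of_rowSumNorm_one_sub_lt h (A⁻¹ *ᵥ b - xh)
  rw [hresidual] at herr
  calc |(A⁻¹ *ᵥ b - xh) i|
      ≤ |(C *ᵥ (b - A *ᵥ xh)) i| + (∑ j, |(1 - C * A) i j|) * vecInfNorm (A⁻¹ *ᵥ b - xh) := by
        simpa only [hresidual] using abs_le_abs_mulVec_add_of_one_sub (C * A) (A⁻¹ *ᵥ b - xh) i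
    _ ≤ |(C *ᵥ (b - A *ᵥ xh)) i| + (∑ j, |(1 - C * A) i j|) *
          (vecInfNorm (C *ᵥ (b - A *ᵥ xh)) / (1 - rowSumNorm (1 - C * A))) := by
        gcongr
    _ = _ := by ring
end

section
/- Let A, B, C, X̂ be real n×n matrices. If ‖I − CA‖_∞ < 1, then A is nonsingular and |A⁻¹B − X̂|·e ≤ |C(B − AX̂)|·e + (‖C(B − AX̂)‖_∞ / (1 − ‖I − CA‖_∞))·|I − CA|·e. -/
open Matrix

/-!
Write `E = A⁻¹B − X̂`, `F = C(B − AX̂)` and `R = I − CA`. Nonsingularity of `A` comes from the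
Neumann series: `CA = I − R` is invertible since `‖R‖_∞ < 1`. Then `E = F + RE`, so
`‖E‖_∞ ≤ ‖F‖_∞ + ‖R‖_∞‖E‖_∞`, i.e. `‖E‖_∞ ≤ ‖F‖_∞ / (1 − ‖R‖_∞)`. Taking absolute row sums in
`E = F + RE` instead, and bounding each row of `|RE|·e` by `(|R|·e)_i ‖E‖_∞`, gives the componentwise
estimate.
-/

attribute [local instance] Matrix.linftyOpNormedAddCommGroup Matrix.linftyOpNormedRing
  Matrix.linftyOpNormedAlgebra

section LinftyOpNorm

variable {l m n : Type*} [Fintype m] [Fintype n]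

-- The `linfty` norm is, by definition, the sup norm of the family of rows in `ℓ¹`.
lemma sum_abs_row_le_linfty_opNorm (A : Matrix m n ℝ) (i : m) : ∑ j, |A i j| ≤ ‖A‖ :=
  calc ∑ j, |A i j| = ‖WithLp.toLp 1 (A i)‖ := by simp [PiLp.norm_eq_of_L1]
    _ ≤ ‖A‖ := norm_le_pi_norm (fun i => WithLp.toLp 1 (A i)) i

lemma sum_abs_row_mul_le (A : Matrix l m ℝ) (B : Matrix m n ℝ) (i : l) :
    ∑ j, |(A * B) i j| ≤ (∑ k, |A i k|) * ‖B‖ :=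
  calc ∑ j, |(A * B) i j| ≤ ∑ j, ∑ k, |A i k| * |B k j| := by
        gcongr with j
        simpa only [mul_apply, abs_mul] using
          Finset.abs_sum_le_sum_abs (fun k => A i k * B k j) Finset.univ
    _ = ∑ k, |A i k| * ∑ j, |B k j| := by
        rw [Finset.sum_comm]
        simp only [Finset.mul_sum]
    _ ≤ ∑ k, |A i k| * ‖B‖ := by
        gcongr with k
        exact sum_abs_row_le_linfty_opNorm B k
    _ = (∑ k, |A i k|) * ‖B‖ := (Finset.sum_mul _ _ _).symm

lemma sum_abs_row_le_of_eq_add_mul {E F : Matrix m n ℝ} {R : Matrix m m ℝ}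
    (h : E = F + R * E) (i : m) :
    ∑ j, |E i j| ≤ ∑ j, |F i j| + (∑ k, |R i k|) * ‖E‖ :=
  calc ∑ j, |E i j| = ∑ j, |F i j + (R * E) i j| := by
        conv_lhs => rw [h]
        rfl
    _ ≤ ∑ j, (|F i j| + |(R * E) i j|) := by gcongr with j; exact abs_add_le _ _
    _ = ∑ j, |F i j| + ∑ j, |(R * E) i j| := Finset.sum_add_distrib
    _ ≤ ∑ j, |F i j| + (∑ k, |R i k|) * ‖E‖ := by gcongr; exact sum_abs_row_mul_le R E i

end LinftyOpNorm

lemma rowSumNorm_eq_linfty_opNorm {n : ℕ} (M : Matrix (Fin n) (Fin n) ℝ) :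
    rowSumNorm M = ‖M‖ := by
  simp [rowSumNorm, linfty_opNorm_def, Finset.sup_univ_eq_ciSup, NNReal.coe_iSup]

lemma norm_le_div_one_sub_of_eq_add_mul {R : Type*} [SeminormedRing R] {e f r : R}
    (hr : ‖r‖ < 1) (h : e = f + r * e) : ‖e‖ ≤ ‖f‖ / (1 - ‖r‖) := by
  have : ‖e‖ ≤ ‖f‖ + ‖r‖ * ‖e‖ :=
    calc ‖e‖ = ‖f + r * e‖ := congrArg norm h
      _ ≤ ‖f‖ + ‖r * e‖ := norm_add_le _ _
      _ ≤ ‖f‖ + ‖r‖ * ‖e‖ := by gcongr; exact norm_mul_le _ _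
  rw [le_div_iff₀ (by linarith)]
  linarith

lemma isUnit_of_norm_one_sub_mul_lt_one {R : Type*} [NormedRing R] [CompleteSpace R]
    [IsDedekindFiniteMonoid R] {a c : R} (h : ‖1 - c * a‖ < 1) : IsUnit a := by
  have hca : IsUnit (c * a) := by
    simpa only [Units.val_oneSub, sub_sub_cancel] using (Units.oneSub (1 - c * a) h).isUnit
  exact isUnit_of_mul_isUnit_right hca

lemma inv_mul_sub_eq_mul_sub_add {n p α : Type*} [Fintype n] [DecidableEq n] [CommRing α]
    {A : Matrix n n α} (hA : IsUnit A) (B X : Matrix n p α) (C : Matrix n n α) :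
    A⁻¹ * B - X = C * (B - A * X) + (1 - C * A) * (A⁻¹ * B - X) := by
  have hAB : A * (A⁻¹ * B) = B := mul_nonsing_inv_cancel_left A B ((isUnit_iff_isUnit_det A).mp hA)
  simp only [Matrix.mul_sub, Matrix.sub_mul, Matrix.one_mul, Matrix.mul_assoc, hAB]
  abel

/-- Variant of Yamamoto's theorem for matrix right-hand sides:
`|A⁻¹B − X̂|·e ≤ |C(B − AX̂)|·e + (‖C(B − AX̂)‖_∞/(1 − ‖I − CA‖_∞))·|I − CA|·e`. -/
theorem stmt2 {n : ℕ} (A B C Xh : Matrix (Fin n) (Fin n) ℝ)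
    (h : rowSumNorm (1 - C * A) < 1) :
    IsUnit A ∧
      ∀ i, (∑ j, |(A⁻¹ * B - Xh) i j|) ≤
        (∑ j, |(C * (B - A * Xh)) i j|) +
          rowSumNorm (C * (B - A * Xh)) / (1 - rowSumNorm (1 - C * A)) *
            (∑ j, |(1 - C * A) i j|) := by
  simp only [rowSumNorm_eq_linfty_opNorm] at h ⊢
  have hA : IsUnit A := isUnit_of_norm_one_sub_mul_lt_one h
  have hE := inv_mul_sub_eq_mul_sub_add hA B Xh C
  refine ⟨hA, fun i => ?_⟩
  calc ∑ j, |(A⁻¹ * B - Xh) i j|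
      ≤ ∑ j, |(C * (B - A * Xh)) i j| + (∑ k, |(1 - C * A) i k|) * ‖A⁻¹ * B - Xh‖ :=
        sum_abs_row_le_of_eq_add_mul hE i
    _ ≤ _ := by
        rw [mul_comm]
        gcongr
        exact norm_le_div_one_sub_of_eq_add_mul h hE
end

section
/- Let A, B be real symmetric n×n matrices with B positive definite. Let λ̂ ∈ ℝ and x̂ ∈ ℝⁿ with x̂ ≠ 0. Then there exists a generalized eigenvalue λ of (A,B) (i.e., Ax = λBx for some x ≠ 0) such that |λ − λ̂| ≤ √(‖B⁻¹‖₂) · ‖Ax̂ − λ̂Bx̂‖₂ / √(x̂ᵀBx̂). -/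
/-!
Factor `B = Rᵀ R` with `R` invertible (the paper takes `R = B^{1/2}`; any such factor works).
The substitution `y = R x` turns the pencil `(A, B)` into the symmetric matrix `C = R⁻ᵀ A R⁻¹`
with the same eigenvalues, and the residual of `(λ̂, R x̂)` for `C` is `R⁻ᵀ r`, where
`r = A x̂ - λ̂ B x̂`. Moreover `‖R x̂‖² = x̂ᵀ B x̂` and `‖R⁻ᵀ r‖² = rᵀ B⁻¹ r ≤ ‖B⁻¹‖₂ ‖r‖²`.
Wilkinson's bound for `C` finishes the proof: in an orthonormal eigenbasis `C - λ̂` scales the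
`i`-th coordinate by `λᵢ - λ̂`, so `‖C y - λ̂ y‖ ≥ minᵢ |λᵢ - λ̂| ‖y‖`.
-/

open Matrix

/-- Euclidean norm of a vector. -/
noncomputable def vecEnorm {n : ℕ} (v : Fin n → ℝ) : ℝ :=
  Real.sqrt (∑ j, v j ^ 2)

/-- Spectral (operator 2-) norm of a matrix. -/
noncomputable def specNorm {n : ℕ} (M : Matrix (Fin n) (Fin n) ℝ) : ℝ :=
  ⨆ v : Fin n → ℝ, vecEnorm (M.mulVec v) / vecEnorm v

theorem LinearMap.IsSymmetric.exists_eigenvector_abs_sub_mul_norm_le {𝕜 E : Type*} [RCLike 𝕜]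
    [NormedAddCommGroup E] [InnerProductSpace 𝕜 E] [FiniteDimensional 𝕜 E] [Nontrivial E]
    {T : E →ₗ[𝕜] E} (hT : T.IsSymmetric) (c : ℝ) (y : E) :
    ∃ (μ : ℝ) (e : E), e ≠ 0 ∧ T e = (μ : 𝕜) • e ∧ |μ - c| * ‖y‖ ≤ ‖T y - (c : 𝕜) • y‖ := by
  have : NeZero (Module.finrank 𝕜 E) := ⟨Module.finrank_pos.ne'⟩
  set b := hT.eigenvectorBasis rfl
  set μ := hT.eigenvalues rfl
  obtain ⟨i₀, -, hmin⟩ := Finset.univ.exists_min_image (fun i => |μ i - c|) Finset.univ_nonempty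
  refine ⟨μ i₀, b i₀, b.orthonormal.ne_zero i₀, hT.apply_eigenvectorBasis rfl i₀, ?_⟩
  have hcoord : ∀ i, b.repr (T y - (c : 𝕜) • y) i = ((μ i - c : ℝ) : 𝕜) * b.repr y i := by
    intro i
    simp [b, μ, hT.eigenvectorBasis_apply_self_apply, sub_mul, Algebra.smul_def]
  rw [← b.repr.norm_map y, ← b.repr.norm_map]
  refine le_of_sq_le_sq ?_ (norm_nonneg _)
  rw [mul_pow, EuclideanSpace.norm_sq_eq, EuclideanSpace.norm_sq_eq, Finset.mul_sum]
  refine Finset.sum_le_sum fun i _ => ?_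
  rw [hcoord, norm_mul, mul_pow, RCLike.norm_ofReal]
  exact mul_le_mul_of_nonneg_right
    (pow_le_pow_left₀ (abs_nonneg _) (hmin i (Finset.mem_univ i)) 2) (sq_nonneg _)

section vecEnorm

variable {n : ℕ}

lemma vecEnorm_eq_norm_toLp (v : Fin n → ℝ) : vecEnorm v = ‖WithLp.toLp 2 v‖ := by
  simp [vecEnorm, EuclideanSpace.norm_eq]

lemma vecEnorm_nonneg (v : Fin n → ℝ) : 0 ≤ vecEnorm v := Real.sqrt_nonneg _

lemma vecEnorm_pos {v : Fin n → ℝ} (hv : v ≠ 0) : 0 < vecEnorm v := by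
  simpa [vecEnorm_eq_norm_toLp] using hv

lemma vecEnorm_sq (v : Fin n → ℝ) : vecEnorm v ^ 2 = v ⬝ᵥ v := by
  rw [vecEnorm, Real.sq_sqrt (by positivity)]
  simp only [dotProduct, sq]

lemma vecEnorm_mulVec_sq (M : Matrix (Fin n) (Fin n) ℝ) (v : Fin n → ℝ) :
    vecEnorm (M *ᵥ v) ^ 2 = v ⬝ᵥ (Mᵀ * M) *ᵥ v := by
  rw [vecEnorm_sq, ← mulVec_mulVec, dotProduct_mulVec v, vecMul_transpose]

lemma dotProduct_le_vecEnorm_mul (u v : Fin n → ℝ) : u ⬝ᵥ v ≤ vecEnorm u * vecEnorm v := by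
  simpa [vecEnorm_eq_norm_toLp, EuclideanSpace.inner_toLp_toLp, dotProduct_comm] using
    real_inner_le_norm (WithLp.toLp 2 u) (WithLp.toLp 2 v)

lemma specNorm_nonneg (M : Matrix (Fin n) (Fin n) ℝ) : 0 ≤ specNorm M :=
  Real.iSup_nonneg fun _ => div_nonneg (vecEnorm_nonneg _) (vecEnorm_nonneg _)

lemma vecEnorm_mulVec_le (M : Matrix (Fin n) (Fin n) ℝ) (v : Fin n → ℝ) :
    vecEnorm (M *ᵥ v) ≤ specNorm M * vecEnorm v := by
  have hT : ∀ w, vecEnorm (M *ᵥ w) ≤ ‖toEuclideanCLM (n := Fin n) (𝕜 := ℝ) M‖ * vecEnorm w :=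
    fun w => by
      simpa [vecEnorm_eq_norm_toLp] using
        (toEuclideanCLM (n := Fin n) (𝕜 := ℝ) M).le_opNorm (WithLp.toLp 2 w)
  rcases eq_or_ne v 0 with rfl | hv
  · simp [vecEnorm]
  have hbdd : BddAbove (Set.range fun w => vecEnorm (M *ᵥ w) / vecEnorm w) :=
    ⟨_, Set.forall_mem_range.2 fun w =>
      div_le_of_le_mul₀ (vecEnorm_nonneg w) (norm_nonneg _) (hT w)⟩
  exact (div_le_iff₀ (vecEnorm_pos hv)).1 (le_ciSup hbdd v)

lemma vecEnorm_mulVec_le_sqrt_specNorm (M : Matrix (Fin n) (Fin n) ℝ) (v : Fin n → ℝ) :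
    vecEnorm (M *ᵥ v) ≤ Real.sqrt (specNorm (Mᵀ * M)) * vecEnorm v := by
  rw [← Real.sqrt_sq (vecEnorm_nonneg (M *ᵥ v)), vecEnorm_mulVec_sq,
    ← Real.sqrt_sq (vecEnorm_nonneg v), ← Real.sqrt_mul (specNorm_nonneg _)]
  gcongr
  calc v ⬝ᵥ (Mᵀ * M) *ᵥ v ≤ vecEnorm v * vecEnorm ((Mᵀ * M) *ᵥ v) :=
        dotProduct_le_vecEnorm_mul _ _
    _ ≤ vecEnorm v * (specNorm (Mᵀ * M) * vecEnorm v) :=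
        mul_le_mul_of_nonneg_left (vecEnorm_mulVec_le _ _) (vecEnorm_nonneg v)
    _ = specNorm (Mᵀ * M) * vecEnorm v ^ 2 := by ring

end vecEnorm

theorem Matrix.IsSymm.exists_eigenvector_abs_sub_mul_vecEnorm_le {n : ℕ} [NeZero n]
    {C : Matrix (Fin n) (Fin n) ℝ} (hC : C.IsSymm) (c : ℝ) (y : Fin n → ℝ) :
    ∃ (μ : ℝ) (e : Fin n → ℝ), e ≠ 0 ∧ C *ᵥ e = μ • e ∧
      |μ - c| * vecEnorm y ≤ vecEnorm (C *ᵥ y - c • y) := by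
  have hT : (toEuclideanLin C).IsSymmetric :=
    isSymmetric_toEuclideanLin_iff.2 (isHermitian_iff_isSymm.2 hC)
  obtain ⟨μ, e, he, hTe, hle⟩ := hT.exists_eigenvector_abs_sub_mul_norm_le c (WithLp.toLp 2 y)
  refine ⟨μ, WithLp.ofLp e, by simpa using he, congrArg WithLp.ofLp hTe, ?_⟩
  simpa [vecEnorm_eq_norm_toLp] using hle

lemma Matrix.PosDef.exists_transpose_mul_self {m : Type*} [Fintype m] [DecidableEq m]
    {B : Matrix m m ℝ} (hB : B.PosDef) : ∃ R : Matrix m m ℝ, IsUnit R ∧ Rᵀ * R = B := by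
  open scoped MatrixOrder in
  obtain ⟨R, hR, rfl⟩ :=
    CStarAlgebra.isStrictlyPositive_iff_eq_star_mul_self.mp hB.isStrictlyPositive
  exact ⟨R, hR, rfl⟩

lemma Matrix.IsSymm.transpose_mul_mul {m K : Type*} [Fintype m] [CommSemiring K]
    {A : Matrix m m K} (hA : A.IsSymm) (M : Matrix m m K) : (Mᵀ * A * M).IsSymm := by
  simp [IsSymm, transpose_mul, hA.eq, Matrix.mul_assoc]

lemma Matrix.congruence_residual_eq {m K : Type*} [Fintype m] [DecidableEq m] [CommRing K]
    {R : Matrix m m K} (hR : IsUnit R) (A : Matrix m m K) (c : K) (x : m → K) :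
    (R⁻¹ᵀ * A * R⁻¹) *ᵥ (R *ᵥ x) - c • (R *ᵥ x) = R⁻¹ᵀ *ᵥ (A *ᵥ x - c • (Rᵀ * R) *ᵥ x) := by
  rw [isUnit_iff_isUnit_det] at hR
  have hRT : R⁻¹ᵀ * Rᵀ = 1 := by rw [← transpose_mul, mul_nonsing_inv R hR, transpose_one]
  rw [mulVec_sub, mulVec_smul, mulVec_mulVec, mulVec_mulVec, mulVec_mulVec, Matrix.mul_assoc,
    nonsing_inv_mul R hR, Matrix.mul_one, ← Matrix.mul_assoc, hRT, Matrix.one_mul]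

/-- Residual bound: some generalized eigenvalue of `(A,B)` lies within
`√‖B⁻¹‖₂·‖Ax̂ − λ̂Bx̂‖₂/√(x̂ᵀBx̂)` of `λ̂`. -/
theorem stmt7 {n : ℕ} (A B : Matrix (Fin n) (Fin n) ℝ)
    (hA : A.IsSymm) (hB : B.PosDef) (lh : ℝ) (xh : Fin n → ℝ) (hxh : xh ≠ 0) :
    ∃ (lam : ℝ) (x : Fin n → ℝ), x ≠ 0 ∧ A.mulVec x = lam • B.mulVec x ∧
      |lam - lh| ≤ Real.sqrt (specNorm B⁻¹) * vecEnorm (A.mulVec xh - lh • B.mulVec xh) /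
        Real.sqrt (xh ⬝ᵥ B.mulVec xh) := by
  have : NeZero n := ⟨by rintro rfl; exact hxh (Subsingleton.elim _ _)⟩
  obtain ⟨R, hR, rfl⟩ := hB.exists_transpose_mul_self
  have hRinj : Function.Injective (R *ᵥ ·) := mulVec_injective_iff_isUnit.2 hR
  have hRTinj : Function.Injective (R⁻¹ᵀ *ᵥ ·) :=
    mulVec_injective_iff_isUnit.2 ((isUnit_transpose _).2 (isUnit_nonsing_inv_iff.2 hR))
  obtain ⟨lam, e, he, hCe, hres⟩ :=
    (hA.transpose_mul_mul R⁻¹).exists_eigenvector_abs_sub_mul_vecEnorm_le lh (R *ᵥ xh)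
  have hRe : R *ᵥ (R⁻¹ *ᵥ e) = e := by
    rw [mulVec_mulVec, mul_nonsing_inv R ((isUnit_iff_isUnit_det R).1 hR), one_mulVec]
  refine ⟨lam, R⁻¹ *ᵥ e, fun h => he (by rw [← hRe, h, mulVec_zero]), ?_, ?_⟩
  · refine sub_eq_zero.1 (hRTinj ?_)
    dsimp only
    rw [← congruence_residual_eq hR, hRe, hCe, sub_self, mulVec_zero]
  · have hRxh : R *ᵥ xh ≠ 0 := hRinj.ne hxh |>.trans_eq (mulVec_zero R)
    rw [← vecEnorm_mulVec_sq, Real.sqrt_sq (vecEnorm_nonneg _), le_div_iff₀ (vecEnorm_pos hRxh)]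
    calc |lam - lh| * vecEnorm (R *ᵥ xh) ≤ _ := hres
      _ = vecEnorm (R⁻¹ᵀ *ᵥ (A *ᵥ xh - lh • (Rᵀ * R) *ᵥ xh)) := by rw [congruence_residual_eq hR]
      _ ≤ Real.sqrt (specNorm (R⁻¹ᵀᵀ * R⁻¹ᵀ)) * _ := vecEnorm_mulVec_le_sqrt_specNorm _ _
      _ = _ := by rw [transpose_transpose, Matrix.mul_inv_rev, transpose_nonsing_inv]
end

section
/- Let A, B be real symmetric n×n matrices with B positive definite, and let X̂, D̂ be real n×n matrices with D̂ diagonal. Set R = X̂ᵀ(AX̂ − BX̂D̂) and G = X̂ᵀBX̂ − I. If ‖G‖_∞ < 1, then BX̂ is invertible and componentwise |(BX̂)⁻¹(AX̂) − D̂|·e ≤ |R|·e + (‖R‖_∞ / (1 − ‖G‖_∞))·|G|·e. -/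
/-!
Put `E = (BX̂)⁻¹(AX̂) − D̂`. Multiplying by `X̂ᵀBX̂ = I + G` gives `(I + G)E = R`, i.e. the
fixed-point equation `E = R − GE`. Row by row this yields `|E|e ≤ |R|e + ‖E‖_∞ |G|e`, and
taking the maximum over rows, `‖E‖_∞ ≤ ‖R‖_∞ / (1 − ‖G‖_∞)`. Invertibility comes from strict
diagonal dominance of `I + G` (Levy–Desplanques), since `X̂ᵀ(BX̂) = I + G`.
-/

open Matrix

section RowSumNorm

variable {n : ℕ}

lemma rowSumNorm_le {M : Matrix (Fin n) (Fin n) ℝ} {c : ℝ} (hc : 0 ≤ c)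
    (h : ∀ i, ∑ j, |M i j| ≤ c) : rowSumNorm M ≤ c :=
  Real.iSup_le h hc

lemma sum_abs_mul_le (M N : Matrix (Fin n) (Fin n) ℝ) (i : Fin n) :
    ∑ j, |(M * N) i j| ≤ (∑ k, |M i k|) * rowSumNorm N :=
  calc ∑ j, |(M * N) i j| ≤ ∑ j, ∑ k, |M i k| * |N k j| := by
        gcongr with j
        simpa only [mul_apply, abs_mul] using
          Finset.abs_sum_le_sum_abs (fun k => M i k * N k j) Finset.univ
    _ = ∑ k, |M i k| * ∑ j, |N k j| := by
        rw [Finset.sum_comm]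
        simp only [Finset.mul_sum]
    _ ≤ ∑ k, |M i k| * rowSumNorm N := by
        gcongr with k
        exact sum_abs_le_rowSumNorm N k
    _ = (∑ k, |M i k|) * rowSumNorm N := by rw [Finset.sum_mul]

lemma det_one_add_ne_zero_of_rowSumNorm_lt_one {G : Matrix (Fin n) (Fin n) ℝ}
    (h : rowSumNorm G < 1) : (1 + G).det ≠ 0 := by
  refine det_ne_zero_of_sum_row_lt_diag fun k => ?_
  have hrow : |G k k| + ∑ j ∈ Finset.univ.erase k, |G k j| < 1 := by
    rw [Finset.add_sum_erase _ (fun j => |G k j|) (Finset.mem_univ k)]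
    exact (sum_abs_le_rowSumNorm G k).trans_lt h
  have hoff :
      ∑ j ∈ Finset.univ.erase k, ‖(1 + G) k j‖ = ∑ j ∈ Finset.univ.erase k, |G k j| :=
    Finset.sum_congr rfl fun j hj => by
      simp [one_apply_ne (Finset.ne_of_mem_erase hj).symm, Real.norm_eq_abs]
  rw [hoff, Matrix.add_apply, one_apply_eq, Real.norm_eq_abs]
  linarith [neg_abs_le (G k k), le_abs_self (1 + G k k)]

variable {E R G : Matrix (Fin n) (Fin n) ℝ}

lemma sum_abs_le_of_eq_sub_mul (hE : E = R - G * E) (i : Fin n) :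
    ∑ j, |E i j| ≤ ∑ j, |R i j| + (∑ j, |G i j|) * rowSumNorm E :=
  calc ∑ j, |E i j| = ∑ j, |R i j - (G * E) i j| := by
        conv_lhs => rw [hE]
        rfl
    _ ≤ ∑ j, (|R i j| + |(G * E) i j|) := by
        gcongr with j
        exact abs_sub _ _
    _ ≤ ∑ j, |R i j| + (∑ j, |G i j|) * rowSumNorm E := by
        rw [Finset.sum_add_distrib]
        gcongr
        exact sum_abs_mul_le G E i

lemma rowSumNorm_le_of_eq_sub_mul (hE : E = R - G * E) (h : rowSumNorm G < 1) :
    rowSumNorm E ≤ rowSumNorm R / (1 - rowSumNorm G) := by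
  have hE_nonneg := rowSumNorm_nonneg E
  have hfix : rowSumNorm E ≤ rowSumNorm R + rowSumNorm G * rowSumNorm E :=
    rowSumNorm_le (add_nonneg (rowSumNorm_nonneg R)
        (mul_nonneg (rowSumNorm_nonneg G) hE_nonneg)) fun i =>
      (sum_abs_le_of_eq_sub_mul hE i).trans <| by
        gcongr
        · exact sum_abs_le_rowSumNorm R i
        · exact sum_abs_le_rowSumNorm G i
  rw [le_div_iff₀ (by linarith)]
  linarith

lemma sum_abs_le_of_eq_sub_mul_of_rowSumNorm_lt_one (hE : E = R - G * E)
    (h : rowSumNorm G < 1) (i : Fin n) :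
    ∑ j, |E i j| ≤ ∑ j, |R i j| + rowSumNorm R / (1 - rowSumNorm G) * ∑ j, |G i j| :=
  (sum_abs_le_of_eq_sub_mul hE i).trans <| by
    rw [mul_comm _ (∑ j, |G i j|)]
    gcongr
    exact rowSumNorm_le_of_eq_sub_mul hE h

end RowSumNorm

theorem stmt11_general {n : ℕ} (A B Xh Dh : Matrix (Fin n) (Fin n) ℝ)
    (R G : Matrix (Fin n) (Fin n) ℝ)
    (hR : R = Xhᵀ * (A * Xh - B * Xh * Dh))
    (hG : G = Xhᵀ * B * Xh - 1)
    (h : rowSumNorm G < 1) :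
    IsUnit (B * Xh) ∧
      ∀ i, (∑ j, |((B * Xh)⁻¹ * (A * Xh) - Dh) i j|) ≤
        (∑ j, |R i j|) +
          rowSumNorm R / (1 - rowSumNorm G) * (∑ j, |G i j|) := by
  have hgram : Xhᵀ * (B * Xh) = 1 + G := by rw [hG, ← Matrix.mul_assoc]; abel
  have hunit : IsUnit (B * Xh) := by
    refine isUnit_of_mul_isUnit_right (x := Xhᵀ) ?_
    rw [hgram, isUnit_iff_isUnit_det]
    exact (det_one_add_ne_zero_of_rowSumNorm_lt_one h).isUnit
  refine ⟨hunit, sum_abs_le_of_eq_sub_mul_of_rowSumNorm_lt_one ?_ h⟩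
  rw [eq_sub_iff_add_eq, ← one_add_mul, ← hgram, hR, Matrix.mul_assoc, Matrix.mul_sub,
    mul_nonsing_inv_cancel_left (A := B * Xh) _ ((isUnit_iff_isUnit_det _).mp hunit),
    Matrix.mul_sub]

/-- Proposed verification bound: with `R = X̂ᵀ(AX̂ − BX̂D̂)` and `G = X̂ᵀBX̂ − I`,
if `‖G‖_∞ < 1` then `BX̂` is invertible and componentwise
`|(BX̂)⁻¹(AX̂) − D̂|·e ≤ |R|·e + (‖R‖_∞/(1 − ‖G‖_∞))·|G|·e`. -/
theorem stmt11 {n : ℕ} (A B Xh Dh : Matrix (Fin n) (Fin n) ℝ)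
    (hA : A.IsSymm) (hB : B.PosDef) (d : Fin n → ℝ) (hD : Dh = Matrix.diagonal d)
    (R G : Matrix (Fin n) (Fin n) ℝ)
    (hR : R = Xhᵀ * (A * Xh - B * Xh * Dh))
    (hG : G = Xhᵀ * B * Xh - 1)
    (h : rowSumNorm G < 1) :
    IsUnit (B * Xh) ∧
      ∀ i, (∑ j, |((B * Xh)⁻¹ * (A * Xh) - Dh) i j|) ≤
        (∑ j, |R i j|) +
          rowSumNorm R / (1 - rowSumNorm G) * (∑ j, |G i j|) :=
  stmt11_general A B Xh Dh R G hR hG h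
end
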